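/- For the function f(x,y) = (1/x)(1/y) for x,y ≥ 1 and f = 0 otherwise, the KP-Fourier transform satisfies ℱ(f)(ξ, η) = Γ(0, iξ) Γ(0, iη) for all ξ ≠ 0, η ≠ 0, where Γ(0, z) = ∫_z^∞ e^{−t}/t dt is the upper incomplete Gamma function; i.e., lim_{b,d→∞} ∫_1^b ∫_1^d (1/(t₁ t₂)) e^{−i(ξ t₁ + η t₂)} dt₁ dt₂ = (∫_1^∞ e^{−iξt}/t dt)(∫_1^∞ e^{−iηt}/t dt). -/

import Mathlib

open Set Filter MeasureTheory Real
open scoped Topology ENNReal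

noncomputable section

/-- Sum of absolute second-order rectangular increments of `f` over the grid `x`, `y`. -/
def vitaliSum (f : ℝ → ℝ → ℝ) (x y : ℕ → ℝ) (n m : ℕ) : ℝ :=
  ∑ i ∈ Finset.range n, ∑ j ∈ Finset.range m,
    |f (x (i+1)) (y (j+1)) - f (x i) (y (j+1)) - f (x (i+1)) (y j) + f (x i) (y j)|

/-- Vitali variation of `f` over a set `Q ⊆ ℝ²`: the supremum, over compact rectangles
contained in `Q` and partitions of them, of the sum of absolute rectangular increments. -/
def vitaliVar (f : ℝ → ℝ → ℝ) (Q : Set (ℝ × ℝ)) : ℝ≥0∞ :=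
  ⨆ (n : ℕ) (m : ℕ) (x : ℕ → ℝ) (y : ℕ → ℝ)
    (_ : ∀ i < n, x i < x (i+1)) (_ : ∀ j < m, y j < y (j+1))
    (_ : Set.Icc (x 0) (x n) ×ˢ Set.Icc (y 0) (y m) ⊆ Q),
    ENNReal.ofReal (vitaliSum f x y n m)

/-- Bounded variation in the sense of Vitali over `ℝ²`. -/
def BVV (f : ℝ → ℝ → ℝ) : Prop := vitaliVar f Set.univ < ⊤

/-- Bounded variation in the sense of Hardy over `ℝ²`. -/
def BVH (f : ℝ → ℝ → ℝ) : Prop :=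
  BVV f ∧ (∀ y, BoundedVariationOn (fun s => f s y) Set.univ) ∧
    (∀ x, BoundedVariationOn (fun s => f x s) Set.univ)

/-- The space `BV_{||0||}(ℝ²)`: Vitali bounded variation and vanishing as `‖(x,y)‖ → ∞`. -/
def BVzero (f : ℝ → ℝ → ℝ) : Prop :=
  BVV f ∧ Tendsto (fun p : ℝ × ℝ => f p.1 p.2) (cocompact (ℝ × ℝ)) (𝓝 0)

/-- `x`, `y` form a partition of `[a,b] × [c,d]` with `n`, resp. `m`, subintervals. -/
def IsPartition (x y : ℕ → ℝ) (n m : ℕ) (a b c d : ℝ) : Prop :=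
  x 0 = a ∧ x n = b ∧ y 0 = c ∧ y m = d ∧
    (∀ i < n, x i < x (i+1)) ∧ (∀ j < m, y j < y (j+1))

/-- The tags `(ξ i j, η i j)` belong to the corresponding subrectangles. -/
def Tags (x y : ℕ → ℝ) (ξ η : ℕ → ℕ → ℝ) (n m : ℕ) : Prop :=
  ∀ i < n, ∀ j < m,
    ξ i j ∈ Set.Icc (x i) (x (i+1)) ∧ η i j ∈ Set.Icc (y j) (y (j+1))

/-- Riemann–Stieltjes sum of `g` with respect to `f`. -/
def RSSum (g f : ℝ → ℝ → ℝ) (x y : ℕ → ℝ) (ξ η : ℕ → ℕ → ℝ) (n m : ℕ) : ℝ :=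
  ∑ i ∈ Finset.range n, ∑ j ∈ Finset.range m,
    g (ξ i j) (η i j) *
      (f (x (i+1)) (y (j+1)) - f (x i) (y (j+1)) - f (x (i+1)) (y j) + f (x i) (y j))

/-- `g` is Riemann–Stieltjes integrable with respect to `f` over `[a,b] × [c,d]`,
with integral `A` (mesh measured by the diagonals of the subrectangles). -/
def RSIntegralOn (g f : ℝ → ℝ → ℝ) (a b c d A : ℝ) : Prop :=
  ∀ ε > 0, ∃ δ > 0, ∀ (n m : ℕ) (x y : ℕ → ℝ) (ξ η : ℕ → ℕ → ℝ),
    IsPartition x y n m a b c d → Tags x y ξ η n m →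
    (∀ i < n, ∀ j < m, Real.sqrt ((x (i+1) - x i)^2 + (y (j+1) - y j)^2) < δ) →
    |RSSum g f x y ξ η n m - A| < ε

/-- Improper Riemann–Stieltjes integral of `g` with respect to `f` over `ℝ²`,
as a Pringsheim limit over expanding compact rectangles. -/
def ImproperRS (g f : ℝ → ℝ → ℝ) (A : ℝ) : Prop :=
  ∀ ε > 0, ∃ M : ℝ, ∀ a b c d : ℝ, a ≤ -M → M ≤ b → c ≤ -M → M ≤ d →
    ∃ B : ℝ, RSIntegralOn g f a b c d B ∧ |B - A| < ε

/-- Improper Riemann–Stieltjes integral of a complex-valued `G` with respect to `f`,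
defined via real and imaginary parts. -/
def ImproperRSC (G : ℝ → ℝ → ℂ) (f : ℝ → ℝ → ℝ) (A : ℂ) : Prop :=
  ImproperRS (fun s t => (G s t).re) f A.re ∧ ImproperRS (fun s t => (G s t).im) f A.im

/-- Riemann sum of `f` over a tagged partition. -/
def KHSum (f : ℝ → ℝ → ℝ) (x y : ℕ → ℝ) (ξ η : ℕ → ℕ → ℝ) (n m : ℕ) : ℝ :=
  ∑ i ∈ Finset.range n, ∑ j ∈ Finset.range m,
    f (ξ i j) (η i j) * (x (i+1) - x i) * (y (j+1) - y j)

/-- The tagged partition is `δ`-fine for the gauge `δ`. -/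
def KHFine (δ : ℝ × ℝ → ℝ) (x y : ℕ → ℝ) (ξ η : ℕ → ℕ → ℝ) (n m : ℕ) : Prop :=
  ∀ i < n, ∀ j < m,
    Set.Icc (x i) (x (i+1)) ⊆
      Set.Ioo (ξ i j - δ (ξ i j, η i j)) (ξ i j + δ (ξ i j, η i j)) ∧
    Set.Icc (y j) (y (j+1)) ⊆
      Set.Ioo (η i j - δ (ξ i j, η i j)) (η i j + δ (ξ i j, η i j))

/-- `f` is Kurzweil–Henstock integrable over `[a,b] × [c,d]` with integral `A`. -/
def KHIntegralOn (f : ℝ → ℝ → ℝ) (a b c d A : ℝ) : Prop :=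
  ∀ ε > 0, ∃ δ : ℝ × ℝ → ℝ, (∀ p, 0 < δ p) ∧
    ∀ (n m : ℕ) (x y : ℕ → ℝ) (ξ η : ℕ → ℕ → ℝ),
      IsPartition x y n m a b c d → Tags x y ξ η n m → KHFine δ x y ξ η n m →
      |KHSum f x y ξ η n m - A| < ε

/-- Kurzweil–Henstock integrability of a complex-valued function, via components. -/
def KHIntegralOnC (f : ℝ → ℝ → ℂ) (a b c d : ℝ) (A : ℂ) : Prop :=
  KHIntegralOn (fun s t => (f s t).re) a b c d A.re ∧
  KHIntegralOn (fun s t => (f s t).im) a b c d A.im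

/-- Pringsheim limit, over expanding compact rectangles, of Kurzweil–Henstock integrals. -/
def HasKHPringsheim (f : ℝ → ℝ → ℝ) (A : ℝ) : Prop :=
  ∀ ε > 0, ∃ M : ℝ, ∀ a b c d : ℝ, a ≤ -M → M ≤ b → c ≤ -M → M ≤ d →
    ∃ B : ℝ, KHIntegralOn f a b c d B ∧ |B - A| < ε

/-- Complex-valued Pringsheim limit of Kurzweil–Henstock integrals. -/
def HasKHPringsheimC (f : ℝ → ℝ → ℂ) (A : ℂ) : Prop :=
  ∀ ε > 0, ∃ M : ℝ, ∀ a b c d : ℝ, a ≤ -M → M ≤ b → c ≤ -M → M ≤ d →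
    ∃ B : ℂ, KHIntegralOnC f a b c d B ∧ ‖B - A‖ < ε

/-- The kernel `e^{-i(ξ t₁ + η t₂)}`. -/
def fourierKernel (ξ η t₁ t₂ : ℝ) : ℂ :=
  Complex.exp (-Complex.I * ((ξ * t₁ + η * t₂ : ℝ) : ℂ))

/-- `A` is the KP-Fourier transform of `f` at `(ξ, η)`. -/
def HasKPFourier (f : ℝ → ℝ → ℝ) (ξ η : ℝ) (A : ℂ) : Prop :=
  HasKHPringsheimC (fun t₁ t₂ => (f t₁ t₂ : ℂ) * fourierKernel ξ η t₁ t₂) A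

/-- The region `{(ξ,η) : α₁ ≤ |ξ| ≤ β₁, α₂ ≤ |η| ≤ β₂}`. -/
def annulusRect (α₁ β₁ α₂ β₂ : ℝ) : Set (ℝ × ℝ) :=
  {p | α₁ ≤ |p.1| ∧ |p.1| ≤ β₁ ∧ α₂ ≤ |p.2| ∧ |p.2| ≤ β₂}

/-- The kernel `(sin(βt) - sin(αt))/t`, extended by continuity at `t = 0`. -/
def sinKernel (α β t : ℝ) : ℝ :=
  if t = 0 then β - α else (Real.sin (β * t) - Real.sin (α * t)) / t

/-- The kernel `h_{α,β}(t) = (sin(βt) - sin(αt))/(πt)`, extended by continuity at `t = 0`. -/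
def sinKernelPi (α β t : ℝ) : ℝ :=
  if t = 0 then (β - α) / π else (Real.sin (β * t) - Real.sin (α * t)) / (π * t)

/-- `g_{(x,y)}(t₁,t₂) = f(x−t₁,y−t₂) + f(x−t₁,y+t₂) + f(x+t₁,y−t₂) + f(x+t₁,y+t₂)`. -/
def quadSum (f : ℝ → ℝ → ℝ) (x y t₁ t₂ : ℝ) : ℝ :=
  f (x - t₁) (y - t₂) + f (x - t₁) (y + t₂) + f (x + t₁) (y - t₂) + f (x + t₁) (y + t₂)

/-!
For `ξ ≠ 0` the improper integral `∫₁^∞ e^{-iξs}/s ds` converges: integrating by parts against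
`1/s` leaves a boundary term that vanishes at infinity and a remainder bounded by `1/(|ξ| s²)`,
hence absolutely integrable.

On a rectangle `[a,b] × [c,d]` around the corner `(1,1)` the integrand of the KP-Fourier
transform is a continuous function `g` truncated to the quadrant `[1,∞)²`. For a constant gauge
`δ`, the Riemann sum differs from the Lebesgue integral cell by cell by at most the oscillation
of the truncated function on the cell. On cells away from the lines `s = 1` and `t = 1` this is
small by uniform continuity of `g`; the cells meeting one of these lines have total width
`O(δ)`. So the integral over the rectangle is `∫_{[1,b]×[1,d]} g`, which by Fubini is
`(∫₁^b e^{-iξs}/s ds) (∫₁^d e^{-iηt}/t dt)`, and the Pringsheim limit is the product of the two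
improper integrals.
-/

section OscillatoryIntegral

variable {c : ℂ}

lemma norm_cexp_mul_ofReal_le_one (hc : c.re ≤ 0) {s : ℝ} (hs : 0 ≤ s) :
    ‖Complex.exp (c * s)‖ ≤ 1 := by
  rw [Complex.norm_exp, Real.exp_le_one_iff, Complex.re_mul_ofReal]
  exact mul_nonpos_of_nonpos_of_nonneg hc hs

lemma tendsto_cexp_mul_div_atTop (hc : c.re ≤ 0) :
    Tendsto (fun s : ℝ => Complex.exp (c * s) / s) atTop (𝓝 0) := by
  rw [tendsto_zero_iff_norm_tendsto_zero]
  refine squeeze_zero' (Eventually.of_forall fun _ => norm_nonneg _) ?_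
    tendsto_inv_atTop_zero
  filter_upwards [eventually_gt_atTop 0] with s hs
  rw [norm_div, Complex.norm_real, Real.norm_of_nonneg hs.le, div_eq_mul_inv]
  exact mul_le_of_le_one_left (by positivity) (norm_cexp_mul_ofReal_le_one hc hs.le)

lemma integrableOn_Ioi_cexp_mul_div_sq (hc : c.re ≤ 0) :
    IntegrableOn (fun s : ℝ => Complex.exp (c * s) / (s : ℂ) ^ 2) (Ioi 1) := by
  refine (integrableOn_Ioi_rpow_of_lt (by norm_num : (-2 : ℝ) < -1) one_pos).mono' ?_ ?_
  · exact (by fun_prop : Measurable _).aestronglyMeasurable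
  filter_upwards [ae_restrict_mem measurableSet_Ioi] with s (hs : 1 < s)
  have hs0 : 0 < s := one_pos.trans hs
  rw [norm_div, norm_pow, Complex.norm_real, Real.norm_of_nonneg hs0.le,
    Real.rpow_neg hs0.le, Real.rpow_two, div_eq_mul_inv]
  exact mul_le_of_le_one_left (by positivity) (norm_cexp_mul_ofReal_le_one hc hs0.le)

lemma integral_cexp_mul_div_eq (hc : c ≠ 0) {b : ℝ} (hb : 1 ≤ b) :
    ∫ s in (1:ℝ)..b, Complex.exp (c * s) / s =
      Complex.exp (c * b) / b * c⁻¹ - Complex.exp c * c⁻¹ +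
        c⁻¹ * ∫ s in (1:ℝ)..b, Complex.exp (c * s) / (s : ℂ) ^ 2 := by
  have hpos : ∀ s ∈ uIcc (1:ℝ) b, (s : ℂ) ≠ 0 := fun s hs =>
    Complex.ofReal_ne_zero.2 (by rw [uIcc_of_le hb] at hs; linarith [hs.1])
  have hu : ∀ s ∈ uIcc (1:ℝ) b, HasDerivAt (fun s : ℝ => (s : ℂ)⁻¹) (-((s : ℂ) ^ 2)⁻¹) s :=
    fun s hs => (hasDerivAt_inv (hpos s hs)).comp_ofReal
  have hv : ∀ s ∈ uIcc (1:ℝ) b,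
      HasDerivAt (fun s : ℝ => Complex.exp (c * s) * c⁻¹) (Complex.exp (c * s)) s := by
    intro s _
    have := (((hasDerivAt_id (s : ℂ)).const_mul c).cexp.mul_const c⁻¹).comp_ofReal
    simpa only [id, mul_one, mul_inv_cancel_right₀ hc] using this
  have := intervalIntegral.integral_mul_deriv_eq_deriv_mul hu hv
    ((ContinuousOn.inv₀ (by fun_prop) fun s hs => pow_ne_zero 2 (hpos s hs)).neg.intervalIntegrable)
    (ContinuousOn.intervalIntegrable (by fun_prop))
  have hrem : ∫ s in (1:ℝ)..b, -((s : ℂ) ^ 2)⁻¹ * (Complex.exp (c * s) * c⁻¹) =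
      -(c⁻¹ * ∫ s in (1:ℝ)..b, Complex.exp (c * s) / (s : ℂ) ^ 2) := by
    rw [← intervalIntegral.integral_const_mul, ← intervalIntegral.integral_neg]
    congr 1 with s
    ring
  have hmain : ∫ s in (1:ℝ)..b, Complex.exp (c * s) / s =
      ∫ s in (1:ℝ)..b, (s : ℂ)⁻¹ * Complex.exp (c * s) := by
    congr 1 with s
    ring
  rw [hmain, this, hrem, Complex.ofReal_one, mul_one, inv_one, one_mul]
  ring

theorem exists_tendsto_integral_cexp_mul_div (hc : c ≠ 0) (hre : c.re ≤ 0) :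
    ∃ I : ℂ, Tendsto (fun b : ℝ => ∫ s in (1:ℝ)..b, Complex.exp (c * s) / s) atTop (𝓝 I) := by
  have hbdry := ((tendsto_cexp_mul_div_atTop hre).mul_const c⁻¹).sub_const (Complex.exp c * c⁻¹)
  have hrem := (intervalIntegral_tendsto_integral_Ioi 1 (integrableOn_Ioi_cexp_mul_div_sq hre)
    tendsto_id).const_mul c⁻¹
  refine ⟨_, (hbdry.add hrem).congr' ?_⟩
  filter_upwards [eventually_ge_atTop 1] with b hb
  exact (integral_cexp_mul_div_eq hc hb).symm

end OscillatoryIntegral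

section Grid

open scoped Finset

variable {x : ℕ → ℝ} {n : ℕ}

lemma pairwiseDisjoint_Ioc_of_lt_succ (hx : ∀ i < n, x i < x (i + 1)) :
    (Finset.range n : Set ℕ).PairwiseDisjoint fun i => Ioc (x i) (x (i + 1)) := by
  have hmono := (strictMonoOn_Iic_of_lt_succ hx).monotoneOn
  intro i hi j hj hij
  simp only [Finset.coe_range, Set.mem_Iio] at hi hj
  rcases hij.lt_or_gt with h | h
  · exact Ioc_disjoint_Ioc_of_le (hmono (show i + 1 ≤ n by omega) hj.le h)
  · exact (Ioc_disjoint_Ioc_of_le (hmono (show j + 1 ≤ n by omega) hi.le h)).symm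

lemma Ioc_subset_Ioc_of_lt_succ (hx : ∀ i < n, x i < x (i + 1)) {i : ℕ} (hi : i < n) :
    Ioc (x i) (x (i + 1)) ⊆ Ioc (x 0) (x n) :=
  have hmono := (strictMonoOn_Iic_of_lt_succ hx).monotoneOn
  Ioc_subset_Ioc (hmono (Nat.zero_le _) hi.le (Nat.zero_le _))
    (hmono (show i + 1 ≤ n by omega) (le_refl n) hi)

lemma biUnion_range_Ioc_of_lt_succ (hx : ∀ i < n, x i < x (i + 1)) :
    ⋃ i ∈ Finset.range n, Ioc (x i) (x (i + 1)) = Ioc (x 0) (x n) :=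
  Subset.antisymm (iUnion₂_subset fun _ hi => Ioc_subset_Ioc_of_lt_succ hx (Finset.mem_range.1 hi))
    (Ioc_subset_biUnion_Ioc n x)

lemma card_filter_mem_Icc_le_two (hx : ∀ i < n, x i < x (i + 1)) (t : ℝ) :
    #{i ∈ Finset.range n | t ∈ Icc (x i) (x (i + 1))} ≤ 2 := by
  have hmono := strictMonoOn_Iic_of_lt_succ hx
  set S := {i ∈ Finset.range n | t ∈ Icc (x i) (x (i + 1))}
  rcases S.eq_empty_or_nonempty with hS | hS
  · simp [hS]
  have hsub : S ⊆ Finset.Icc (S.min' hS) (S.min' hS + 1) := by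
    intro j hj
    refine Finset.mem_Icc.2 ⟨S.min'_le j hj, not_lt.1 fun hlt => ?_⟩
    obtain ⟨hk, hkt⟩ := Finset.mem_filter.1 (S.min'_mem hS)
    obtain ⟨hj, hjt⟩ := Finset.mem_filter.1 hj
    have hk : S.min' hS + 1 ≤ n := Finset.mem_range.1 hk
    have hj : j ≤ n := (Finset.mem_range.1 hj).le
    linarith [hmono hk hj hlt, hkt.2, hjt.1]
  have := Finset.card_le_card hsub
  simp only [Nat.card_Icc] at this
  omega

lemma sum_ite_mem_Icc_mul_sub_le (hx : ∀ i < n, x i < x (i + 1)) {w K : ℝ} (hw0 : 0 ≤ w)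
    (hw : ∀ i < n, x (i + 1) - x i ≤ w) (hK : 0 ≤ K) (t : ℝ) :
    ∑ i ∈ Finset.range n, (if t ∈ Icc (x i) (x (i + 1)) then K else 0) * (x (i + 1) - x i) ≤
      K * (2 * w) := by
  simp_rw [ite_mul, zero_mul]
  rw [← Finset.sum_filter, ← Finset.mul_sum]
  gcongr
  calc ∑ i ∈ Finset.range n with t ∈ Icc (x i) (x (i + 1)), (x (i + 1) - x i)
      ≤ #{i ∈ Finset.range n | t ∈ Icc (x i) (x (i + 1))} • w :=
        Finset.sum_le_card_nsmul _ _ _ fun i hi =>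
          hw i (Finset.mem_range.1 (Finset.mem_filter.1 hi).1)
    _ ≤ 2 * w := by
        rw [nsmul_eq_mul]
        exact mul_le_mul_of_nonneg_right (by exact_mod_cast card_filter_mem_Icc_le_two hx t) hw0

lemma sum_range_sum_range_add_mul_sub (y : ℕ → ℝ) (m : ℕ) (ε : ℝ) (u v : ℕ → ℝ) :
    ∑ i ∈ Finset.range n, ∑ j ∈ Finset.range m,
        (ε + u i + v j) * (x (i + 1) - x i) * (y (j + 1) - y j) =
      ε * (x n - x 0) * (y m - y 0) +
        (∑ i ∈ Finset.range n, u i * (x (i + 1) - x i)) * (y m - y 0) +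
        (x n - x 0) * ∑ j ∈ Finset.range m, v j * (y (j + 1) - y j) := by
  simp only [add_mul, Finset.sum_add_distrib, ← Finset.mul_sum, ← Finset.sum_mul,
    Finset.sum_range_sub]
  rw [← Finset.sum_range_sub x n, Finset.sum_mul_sum]
  exact congrArg _ (Finset.sum_congr rfl fun _ _ => Finset.sum_congr rfl fun _ _ => by ring)

end Grid

section CellDecomposition

variable {α β E : Type*} [MeasurableSpace α] [MeasurableSpace β] {μ : Measure α} {ν : Measure β}
  [NormedAddCommGroup E] [NormedSpace ℝ E]

lemma setIntegral_biUnion_prod_biUnion {ι κ : Type*} {s : Finset ι} {t : Finset κ}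
    {A : ι → Set α} {B : κ → Set β} {F : α × β → E} (hA : ∀ i ∈ s, MeasurableSet (A i))
    (hB : ∀ j ∈ t, MeasurableSet (B j)) (hAd : (s : Set ι).PairwiseDisjoint A)
    (hBd : (t : Set κ).PairwiseDisjoint B)
    (hF : IntegrableOn F ((⋃ i ∈ s, A i) ×ˢ ⋃ j ∈ t, B j) (μ.prod ν)) :
    ∫ p in (⋃ i ∈ s, A i) ×ˢ ⋃ j ∈ t, B j, F p ∂μ.prod ν =
      ∑ i ∈ s, ∑ j ∈ t, ∫ p in A i ×ˢ B j, F p ∂μ.prod ν := by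
  have hunion : (⋃ i ∈ s, A i) ×ˢ (⋃ j ∈ t, B j) = ⋃ p ∈ s ×ˢ t, A p.1 ×ˢ B p.2 := by
    simpa only [← Finset.coe_product, Finset.mem_coe] using (biUnion_prod (↑s) (↑t) A B).symm
  rw [← Finset.sum_product', hunion]
  refine integral_biUnion_finset _ (fun p hp => ?_) (fun p hp q hq hpq => ?_) fun p hp => ?_
  · rw [Finset.mem_product] at hp
    exact (hA _ hp.1).prod (hB _ hp.2)
  · rw [Finset.mem_coe, Finset.mem_product] at hp hq
    refine Set.disjoint_prod.2 ?_
    by_cases h : p.1 = q.1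
    · exact Or.inr (hBd hp.2 hq.2 fun h' => hpq (Prod.ext h h'))
    · exact Or.inl (hAd hp.1 hq.1 h)
  · rw [Finset.mem_product] at hp
    exact hF.mono_set (prod_mono (Finset.subset_set_biUnion_of_mem hp.1)
      (Finset.subset_set_biUnion_of_mem hp.2))

lemma abs_mul_measureReal_sub_setIntegral_le {s : Set α} {F : α → ℝ} {r e : ℝ} (hs : μ s < ⊤)
    (hF : IntegrableOn F s μ) (he : ∀ p ∈ s, |r - F p| ≤ e) :
    |r * μ.real s - ∫ p in s, F p ∂μ| ≤ e * μ.real s := by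
  have hr : IntegrableOn (fun _ => r) s μ := integrableOn_const hs.ne
  rw [mul_comm, ← smul_eq_mul, ← setIntegral_const, ← integral_sub hr hF]
  exact norm_setIntegral_le_of_norm_le_const (f := fun p => r - F p) hs he

end CellDecomposition

section RiemannSum

variable {x y : ℕ → ℝ} {n m : ℕ}

lemma setIntegral_Ioc_prod_Ioc_eq_sum {E : Type*} [NormedAddCommGroup E] [NormedSpace ℝ E]
    {F : ℝ × ℝ → E} (hx : ∀ i < n, x i < x (i + 1)) (hy : ∀ j < m, y j < y (j + 1))
    (hF : IntegrableOn F (Ioc (x 0) (x n) ×ˢ Ioc (y 0) (y m))) :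
    ∫ p in Ioc (x 0) (x n) ×ˢ Ioc (y 0) (y m), F p =
      ∑ i ∈ Finset.range n, ∑ j ∈ Finset.range m,
        ∫ p in Ioc (x i) (x (i + 1)) ×ˢ Ioc (y j) (y (j + 1)), F p := by
  rw [← biUnion_range_Ioc_of_lt_succ hx, ← biUnion_range_Ioc_of_lt_succ hy] at hF ⊢
  exact setIntegral_biUnion_prod_biUnion (fun _ _ => measurableSet_Ioc)
    (fun _ _ => measurableSet_Ioc) (pairwiseDisjoint_Ioc_of_lt_succ hx)
    (pairwiseDisjoint_Ioc_of_lt_succ hy) hF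

lemma abs_KHSum_sub_setIntegral_le {F : ℝ × ℝ → ℝ} {tx ty : ℕ → ℕ → ℝ} {e : ℕ → ℕ → ℝ}
    (hx : ∀ i < n, x i < x (i + 1)) (hy : ∀ j < m, y j < y (j + 1))
    (hF : IntegrableOn F (Ioc (x 0) (x n) ×ˢ Ioc (y 0) (y m)))
    (he : ∀ i < n, ∀ j < m, ∀ p ∈ Ioc (x i) (x (i + 1)) ×ˢ Ioc (y j) (y (j + 1)),
      |F (tx i j, ty i j) - F p| ≤ e i j) :
    |KHSum (fun s t => F (s, t)) x y tx ty n m -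
        ∫ p in Ioc (x 0) (x n) ×ˢ Ioc (y 0) (y m), F p| ≤
      ∑ i ∈ Finset.range n, ∑ j ∈ Finset.range m,
        e i j * (x (i + 1) - x i) * (y (j + 1) - y j) := by
  rw [setIntegral_Ioc_prod_Ioc_eq_sum hx hy hF, KHSum, ← Finset.sum_sub_distrib]
  refine (Finset.abs_sum_le_sum_abs _ _).trans (Finset.sum_le_sum fun i hi => ?_)
  rw [← Finset.sum_sub_distrib]
  refine (Finset.abs_sum_le_sum_abs _ _).trans (Finset.sum_le_sum fun j hj => ?_)
  have hi := Finset.mem_range.1 hi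
  have hj := Finset.mem_range.1 hj
  have hvol : volume.real (Ioc (x i) (x (i + 1)) ×ˢ Ioc (y j) (y (j + 1))) =
      (x (i + 1) - x i) * (y (j + 1) - y j) := by
    rw [Measure.volume_eq_prod, measureReal_prod_prod, Real.volume_real_Ioc_of_le (hx i hi).le,
      Real.volume_real_Ioc_of_le (hy j hj).le]
  have hsub : Ioc (x i) (x (i + 1)) ×ˢ Ioc (y j) (y (j + 1)) ⊆ Ioc (x 0) (x n) ×ˢ Ioc (y 0) (y m) :=
    prod_mono (Ioc_subset_Ioc_of_lt_succ hx hi) (Ioc_subset_Ioc_of_lt_succ hy hj)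
  have := abs_mul_measureReal_sub_setIntegral_le
    ((Metric.isBounded_Ioc _ _).prod (Metric.isBounded_Ioc _ _)).measure_lt_top
    (hF.mono_set hsub) (he i hi j hj)
  rw [hvol] at this
  simpa only [mul_assoc] using this

end RiemannSum

section FineGrid

variable {x y : ℕ → ℝ} {tx ty : ℕ → ℕ → ℝ} {n m i j : ℕ} {δ : ℝ}

lemma KHFine.dist_lt (hfine : KHFine (fun _ => δ) x y tx ty n m) (hi : i < n) (hj : j < m)
    {p : ℝ × ℝ} (hp : p ∈ Icc (x i) (x (i + 1)) ×ˢ Icc (y j) (y (j + 1))) :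
    dist (tx i j, ty i j) p < δ := by
  have h₁ := (hfine i hi j hj).1 hp.1
  have h₂ := (hfine i hi j hj).2 hp.2
  rw [mem_Ioo] at h₁ h₂
  rw [Prod.dist_eq, max_lt_iff, Real.dist_eq, Real.dist_eq, abs_sub_lt_iff, abs_sub_lt_iff]
  refine ⟨⟨?_, ?_⟩, ?_, ?_⟩ <;> linarith

lemma KHFine.sub_lt_two_mul (hfine : KHFine (fun _ => δ) x y tx ty n m) (hi : i < n) (hj : j < m)
    (hx : x i ≤ x (i + 1)) (hy : y j ≤ y (j + 1)) :
    x (i + 1) - x i < 2 * δ ∧ y (j + 1) - y j < 2 * δ := by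
  have h := (dist_triangle_left _ _ (tx i j, ty i j)).trans_lt (add_lt_add
    (hfine.dist_lt hi hj (p := (x i, y j)) ⟨left_mem_Icc.2 hx, left_mem_Icc.2 hy⟩)
    (hfine.dist_lt hi hj (p := (x (i + 1), y (j + 1))) ⟨right_mem_Icc.2 hx, right_mem_Icc.2 hy⟩))
  rw [Prod.dist_eq, max_lt_iff, Real.dist_eq, Real.dist_eq, abs_sub_lt_iff, abs_sub_lt_iff] at h
  constructor <;> linarith [h.1.2, h.2.2]

end FineGrid

section Quadrant

variable {φ : ℝ × ℝ → ℝ} {α β a b c d C ε δ : ℝ}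

lemma Ioc_inter_Ici_of_lt (h : a < α) : Ioc a b ∩ Ici α = Icc α b := by
  ext t
  simp only [mem_inter_iff, mem_Ioc, mem_Ici, mem_Icc]
  constructor
  · rintro ⟨⟨-, htb⟩, hαt⟩
    exact ⟨hαt, htb⟩
  · rintro ⟨hαt, htb⟩
    exact ⟨⟨h.trans_le hαt, htb⟩, hαt⟩

lemma setIntegral_indicator_Ici_prod_Ici (ha : a < α) (hc : c < β) :
    ∫ p in Ioc a b ×ˢ Ioc c d, (Ici α ×ˢ Ici β).indicator φ p =
      ∫ p in Icc α b ×ˢ Icc β d, φ p := by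
  rw [setIntegral_indicator (measurableSet_Ici.prod measurableSet_Ici), prod_inter_prod,
    Ioc_inter_Ici_of_lt ha, Ioc_inter_Ici_of_lt hc]

lemma integrableOn_indicator_Ici_prod_Ici (hφ : ContinuousOn φ (Icc α b ×ˢ Icc β d))
    (ha : a < α) (hc : c < β) :
    IntegrableOn ((Ici α ×ˢ Ici β).indicator φ) (Ioc a b ×ˢ Ioc c d) := by
  rw [integrableOn_indicator_iff (measurableSet_Ici.prod measurableSet_Ici), inter_comm,
    prod_inter_prod, Ioc_inter_Ici_of_lt ha, Ioc_inter_Ici_of_lt hc]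
  exact hφ.integrableOn_compact (isCompact_Icc.prod isCompact_Icc)

lemma abs_indicator_Ici_prod_Ici_sub_le (hC : ∀ p ∈ Icc α b ×ˢ Icc β d, ‖φ p‖ ≤ C)
    (hC0 : 0 ≤ C) (hε : 0 ≤ ε)
    (hφ : ∀ p ∈ Icc α b ×ˢ Icc β d, ∀ q ∈ Icc α b ×ˢ Icc β d, dist p q < δ → dist (φ p) (φ q) < ε)
    {u₀ u₁ v₀ v₁ : ℝ} (hu : u₁ ≤ b) (hv : v₁ ≤ d) {p q : ℝ × ℝ}
    (hp : p ∈ Icc u₀ u₁ ×ˢ Icc v₀ v₁) (hq : q ∈ Icc u₀ u₁ ×ˢ Icc v₀ v₁) (hpq : dist p q < δ) :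
    |(Ici α ×ˢ Ici β).indicator φ p - (Ici α ×ˢ Ici β).indicator φ q| ≤
      ε + (if α ∈ Icc u₀ u₁ then 2 * C else 0) + (if β ∈ Icc v₀ v₁ then 2 * C else 0) := by
  set Q := Ici α ×ˢ Ici β
  have hbound : ∀ r ∈ Icc u₀ u₁ ×ˢ Icc v₀ v₁, |Q.indicator φ r| ≤ C := by
    intro r hr
    by_cases hrQ : r ∈ Q
    · rw [indicator_of_mem hrQ]
      exact hC r ⟨⟨hrQ.1, hr.1.2.trans hu⟩, ⟨hrQ.2, hr.2.2.trans hv⟩⟩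
    · rwa [indicator_of_notMem hrQ, abs_zero]
  have hcrude : |Q.indicator φ p - Q.indicator φ q| ≤ 2 * C := by
    linarith [abs_sub (Q.indicator φ p) (Q.indicator φ q), hbound p hp, hbound q hq]
  by_cases hαu : α ∈ Icc u₀ u₁
  · rw [if_pos hαu]
    split_ifs <;> linarith
  by_cases hβv : β ∈ Icc v₀ v₁
  · rw [if_neg hαu, if_pos hβv]
    linarith
  rw [if_neg hαu, if_neg hβv, add_zero, add_zero]
  simp only [mem_Icc, not_and_or, not_le] at hαu hβv
  by_cases hin : α < u₀ ∧ β < v₀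
  · have hK : ∀ r ∈ Icc u₀ u₁ ×ˢ Icc v₀ v₁, r ∈ Q ∧ r ∈ Icc α b ×ˢ Icc β d := fun r hr =>
      ⟨⟨hin.1.le.trans hr.1.1, hin.2.le.trans hr.2.1⟩,
        ⟨⟨hin.1.le.trans hr.1.1, hr.1.2.trans hu⟩, ⟨hin.2.le.trans hr.2.1, hr.2.2.trans hv⟩⟩⟩
    rw [indicator_of_mem (hK p hp).1, indicator_of_mem (hK q hq).1]
    exact (hφ p (hK p hp).2 q (hK q hq).2 hpq).le
  · have hout : u₁ < α ∨ v₁ < β := by tauto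
    have hQ : ∀ r ∈ Icc u₀ u₁ ×ˢ Icc v₀ v₁, r ∉ Q := by
      rintro r hr ⟨hr₁ : α ≤ r.1, hr₂ : β ≤ r.2⟩
      rcases hout with h | h
      · linarith [hr.1.2]
      · linarith [hr.2.2]
    rwa [indicator_of_notMem (hQ p hp), indicator_of_notMem (hQ q hq), sub_zero, abs_zero]


lemma abs_KHSum_indicator_Ici_prod_Ici_sub_le (hφc : ContinuousOn φ (Icc α b ×ˢ Icc β d))
    (hC : ∀ p ∈ Icc α b ×ˢ Icc β d, ‖φ p‖ ≤ C) (hC0 : 0 ≤ C) (hε : 0 ≤ ε) (hδ : 0 < δ)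
    (hφ : ∀ p ∈ Icc α b ×ˢ Icc β d, ∀ q ∈ Icc α b ×ˢ Icc β d, dist p q < δ → dist (φ p) (φ q) < ε)
    (ha : a < α) (hb : α ≤ b) (hc : c < β) (hd : β ≤ d)
    {x y : ℕ → ℝ} {tx ty : ℕ → ℕ → ℝ} {n m : ℕ} (hP : IsPartition x y n m a b c d)
    (htags : Tags x y tx ty n m) (hfine : KHFine (fun _ => δ) x y tx ty n m) :
    |KHSum (fun s t => (Ici α ×ˢ Ici β).indicator φ (s, t)) x y tx ty n m -
        ∫ p in Icc α b ×ˢ Icc β d, φ p| ≤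
      ε * ((b - a) * (d - c)) + 8 * C * δ * ((b - a) + (d - c)) := by
  obtain ⟨rfl, rfl, rfl, rfl, hx, hy⟩ := hP
  have hxm := (strictMonoOn_Iic_of_lt_succ hx).monotoneOn
  have hym := (strictMonoOn_Iic_of_lt_succ hy).monotoneOn
  have hn : 0 < n := Nat.pos_of_ne_zero fun h => by subst h; linarith
  have hm : 0 < m := Nat.pos_of_ne_zero fun h => by subst h; linarith
  have hwx : ∀ i < n, x (i + 1) - x i ≤ 2 * δ := fun i hi =>
    (hfine.sub_lt_two_mul hi hm (hx i hi).le (hy 0 hm).le).1.le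
  have hwy : ∀ j < m, y (j + 1) - y j ≤ 2 * δ := fun j hj =>
    (hfine.sub_lt_two_mul hn hj (hx 0 hn).le (hy j hj).le).2.le
  rw [← setIntegral_indicator_Ici_prod_Ici ha hc]
  refine (abs_KHSum_sub_setIntegral_le hx hy (integrableOn_indicator_Ici_prod_Ici hφc ha hc)
    (e := fun i j => ε + (if α ∈ Icc (x i) (x (i + 1)) then 2 * C else 0) +
      (if β ∈ Icc (y j) (y (j + 1)) then 2 * C else 0))
    fun i hi j hj p hp => abs_indicator_Ici_prod_Ici_sub_le hC hC0 hε hφ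
      (hxm (show i + 1 ≤ n from hi) (le_refl n) hi) (hym (show j + 1 ≤ m from hj) (le_refl m) hj)
      (htags i hi j hj) (prod_mono Ioc_subset_Icc_self Ioc_subset_Icc_self hp)
      (hfine.dist_lt hi hj (prod_mono Ioc_subset_Icc_self Ioc_subset_Icc_self hp))).trans ?_
  rw [sum_range_sum_range_add_mul_sub]
  have hxn : 0 ≤ x n - x 0 := by linarith
  have hyn : 0 ≤ y m - y 0 := by linarith
  calc _ ≤ ε * (x n - x 0) * (y m - y 0) + 2 * C * (2 * (2 * δ)) * (y m - y 0) +
        (x n - x 0) * (2 * C * (2 * (2 * δ))) := by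
        gcongr
        · exact sum_ite_mem_Icc_mul_sub_le hx (by positivity) hwx (by positivity) α
        · exact sum_ite_mem_Icc_mul_sub_le hy (by positivity) hwy (by positivity) β
    _ = _ := by ring

theorem khIntegralOn_indicator_Ici_prod_Ici (hφ : ContinuousOn φ (Icc α b ×ˢ Icc β d))
    (ha : a < α) (hb : α ≤ b) (hc : c < β) (hd : β ≤ d) :
    KHIntegralOn (fun s t => (Ici α ×ˢ Ici β).indicator φ (s, t)) a b c d
      (∫ p in Icc α b ×ˢ Icc β d, φ p) := by
  have hK : IsCompact (Icc α b ×ˢ Icc β d) := isCompact_Icc.prod isCompact_Icc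
  obtain ⟨C, hC⟩ := hK.exists_bound_of_continuousOn hφ
  have hC0 : 0 ≤ C := (norm_nonneg _).trans (hC (α, β) ⟨left_mem_Icc.2 hb, left_mem_Icc.2 hd⟩)
  set P := (b - a) * (d - c)
  set L := (b - a) + (d - c)
  have hP : 0 < P := mul_pos (by linarith) (by linarith)
  have hL : 0 < L := by linarith
  intro ε hε
  obtain ⟨δ₀, hδ₀, hφδ₀⟩ := Metric.uniformContinuousOn_iff.1
    (hK.uniformContinuousOn_of_continuous hφ) (ε / (2 * P)) (by positivity)
  set δ := min δ₀ (ε / (16 * (C + 1) * L))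
  have hδ : 0 < δ := lt_min hδ₀ (by positivity)
  refine ⟨fun _ => δ, fun _ => hδ, fun n m x y tx ty hpart htags hfine => ?_⟩
  refine (abs_KHSum_indicator_Ici_prod_Ici_sub_le hφ hC hC0 (by positivity) hδ
    (fun p hp q hq hpq => hφδ₀ p hp q hq (hpq.trans_le (min_le_left _ _))) ha hb hc hd hpart
    htags hfine).trans_lt ?_
  have h₁ : ε / (2 * P) * P = ε / 2 := by field_simp
  have h₂ : 8 * C * δ * L < ε / 2 := calc
    8 * C * δ * L ≤ 8 * C * (ε / (16 * (C + 1) * L)) * L := by gcongr; exact min_le_right _ _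
    _ = ε / 2 * (C / (C + 1)) := by field_simp; ring
    _ < ε / 2 :=
      mul_lt_of_lt_one_right (by positivity) ((div_lt_one (by positivity)).2 (by linarith))
  linarith

theorem khIntegralOnC_indicator_Ici_prod_Ici {g : ℝ × ℝ → ℂ}
    (hg : ContinuousOn g (Icc α b ×ˢ Icc β d)) (ha : a < α) (hb : α ≤ b) (hc : c < β)
    (hd : β ≤ d) :
    KHIntegralOnC (fun s t => (Ici α ×ˢ Ici β).indicator g (s, t)) a b c d
      (∫ p in Icc α b ×ˢ Icc β d, g p) := by
  have hint : IntegrableOn g (Icc α b ×ˢ Icc β d) :=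
    hg.integrableOn_compact (isCompact_Icc.prod isCompact_Icc)
  have hcomp : ∀ (L : ℂ → ℝ), L 0 = 0 → ∀ s t,
      L ((Ici α ×ˢ Ici β).indicator g (s, t)) = (Ici α ×ˢ Ici β).indicator (L ∘ g) (s, t) :=
    fun L hL s t => by rw [indicator_comp_of_zero hL, Function.comp_apply]
  constructor
  · simp only [hcomp Complex.re Complex.zero_re]
    convert khIntegralOn_indicator_Ici_prod_Ici (Complex.continuous_re.comp_continuousOn hg)
      ha hb hc hd using 1
    exact (integral_re hint).symm
  · simp only [hcomp Complex.im Complex.zero_im]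
    convert khIntegralOn_indicator_Ici_prod_Ici (Complex.continuous_im.comp_continuousOn hg)
      ha hb hc hd using 1
    exact (integral_im hint).symm

end Quadrant

theorem hasKHPringsheimC_of_tendsto {G : ℝ → ℝ → ℂ} {J : ℝ × ℝ → ℂ} {A : ℂ} {α β : ℝ}
    (hG : ∀ a b c d, a < α → α ≤ b → c < β → β ≤ d → KHIntegralOnC G a b c d (J (b, d)))
    (hJ : Tendsto J (atTop ×ˢ atTop) (𝓝 A)) : HasKHPringsheimC G A := by
  rw [prod_atTop_atTop_eq] at hJ
  intro ε hε
  obtain ⟨N, hN⟩ := eventually_atTop_prod_self'.1 (hJ.eventually (Metric.ball_mem_nhds A hε))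
  set M := max N (max (|α| + 1) (|β| + 1))
  have hNM : N ≤ M := le_max_left _ _
  have hαM : |α| + 1 ≤ M := (le_max_left _ _).trans (le_max_right _ _)
  have hβM : |β| + 1 ≤ M := (le_max_right _ _).trans (le_max_right _ _)
  refine ⟨M, fun a b c d ha hb hc hd => ⟨J (b, d), hG a b c d ?_ ?_ ?_ ?_, ?_⟩⟩
  · linarith [neg_abs_le α]
  · linarith [le_abs_self α]
  · linarith [neg_abs_le β]
  · linarith [le_abs_self β]
  · exact dist_eq_norm (J (b, d)) A ▸ hN b (hNM.trans hb) d (hNM.trans hd)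

lemma setIntegral_Icc_prod_Icc_mul {L : Type*} [RCLike L] (f g : ℝ → L) {a b c d : ℝ}
    (hab : a ≤ b) (hcd : c ≤ d) :
    ∫ p in Icc a b ×ˢ Icc c d, f p.1 * g p.2 = (∫ s in a..b, f s) * ∫ t in c..d, g t := by
  rw [intervalIntegral.integral_of_le hab, intervalIntegral.integral_of_le hcd,
    ← integral_Icc_eq_integral_Ioc, ← integral_Icc_eq_integral_Ioc, ← setIntegral_prod_mul,
    Measure.volume_eq_prod]

lemma exists_tendsto_integral_cexp_neg_I_mul_div {ξ : ℝ} (hξ : ξ ≠ 0) :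
    ∃ I : ℂ, Tendsto (fun b : ℝ =>
      ∫ s in (1:ℝ)..b, Complex.exp (-Complex.I * ((ξ * s : ℝ) : ℂ)) / (s : ℂ)) atTop (𝓝 I) := by
  simpa only [Complex.ofReal_mul, mul_assoc] using
    exists_tendsto_integral_cexp_mul_div (c := -Complex.I * ξ) (by simpa using hξ) (by simp)

lemma ofReal_ite_mul_fourierKernel_eq_indicator (ξ η s t : ℝ) :
    ((if 1 ≤ s ∧ 1 ≤ t then s⁻¹ * t⁻¹ else 0 : ℝ) : ℂ) * fourierKernel ξ η s t =
      (Ici 1 ×ˢ Ici 1).indicator (fun p : ℝ × ℝ =>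
        Complex.exp (-Complex.I * ((ξ * p.1 : ℝ) : ℂ)) / (p.1 : ℂ) *
          (Complex.exp (-Complex.I * ((η * p.2 : ℝ) : ℂ)) / (p.2 : ℂ))) (s, t) := by
  by_cases h : 1 ≤ s ∧ 1 ≤ t
  · rw [if_pos h, indicator_of_mem (show (s, t) ∈ Ici (1:ℝ) ×ˢ Ici 1 from h), fourierKernel,
      Complex.ofReal_add, mul_add, Complex.exp_add]
    push_cast
    ring
  · rw [if_neg h, indicator_of_notMem (show (s, t) ∉ Ici (1:ℝ) ×ˢ Ici 1 from h),
      Complex.ofReal_zero, zero_mul]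

/-- Example: for `f(x,y) = (1/x)(1/y)` on `x,y ≥ 1` (and `0` otherwise) and `ξ ≠ 0`,
`η ≠ 0`, one has `ℱ(f)(ξ,η) = Γ(0,iξ)Γ(0,iη)`, i.e. the KP-Fourier transform equals the
product of the improper integrals `∫_1^∞ e^{−iξt}/t dt` and `∫_1^∞ e^{−iηt}/t dt`. -/
theorem stmt15 (ξ η : ℝ) (hξ : ξ ≠ 0) (hη : η ≠ 0) :
    ∃ Iξ Iη : ℂ,
      Tendsto (fun b : ℝ =>
          ∫ s in (1:ℝ)..b, Complex.exp (-Complex.I * ((ξ * s : ℝ) : ℂ)) / (s : ℂ))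
        atTop (𝓝 Iξ) ∧
      Tendsto (fun b : ℝ =>
          ∫ s in (1:ℝ)..b, Complex.exp (-Complex.I * ((η * s : ℝ) : ℂ)) / (s : ℂ))
        atTop (𝓝 Iη) ∧
      HasKPFourier (fun x y => if 1 ≤ x ∧ 1 ≤ y then x⁻¹ * y⁻¹ else 0) ξ η (Iξ * Iη) := by
  obtain ⟨Iξ, hIξ⟩ := exists_tendsto_integral_cexp_neg_I_mul_div hξ
  obtain ⟨Iη, hIη⟩ := exists_tendsto_integral_cexp_neg_I_mul_div hη
  refine ⟨Iξ, Iη, hIξ, hIη, hasKHPringsheimC_of_tendsto (α := 1) (β := 1)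
    (fun a b c d ha hb hc hd => ?_) ((hIξ.comp tendsto_fst).mul (hIη.comp tendsto_snd))⟩
  simp only [ofReal_ite_mul_fourierKernel_eq_indicator, Function.comp_apply]
  rw [← setIntegral_Icc_prod_Icc_mul _ _ hb hd]
  refine khIntegralOnC_indicator_Ici_prod_Ici ?_ ha hb hc hd
  refine .mul (.div (by fun_prop) (by fun_prop) fun p hp => ?_)
    (.div (by fun_prop) (by fun_prop) fun p hp => ?_) <;>
  exact Complex.ofReal_ne_zero.2 (by linarith [hp.1.1, hp.2.1])
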